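/- Let A be a real n×n matrix. Then A is diagonalizable over ℝ if and only if there exists a positive definite real symmetric matrix H with H·A symmetric. -/

import Mathlib

/-!
If `A = P D P⁻¹`, then `H = (P⁻¹)ᴴ P⁻¹` works, since `H A = (P⁻¹)ᴴ D P⁻¹` and a real diagonal `D`
is symmetric. Conversely, `Aᴴ H = H A` says that `S A S⁻¹` is Hermitian for `S = √H`; the spectral
theorem diagonalizes it, and `A` is similar to it.
-/

open Matrix
open scoped MatrixOrder ComplexOrder

namespace Matrix

variable {n : Type*} [Fintype n] [DecidableEq n]

def IsDiagonalizable {R : Type*} [CommRing R] (A : Matrix n n R) : Prop :=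
  ∃ P D : Matrix n n R, IsUnit P ∧ D.IsDiag ∧ A = P * D * P⁻¹

theorem IsDiagonalizable.of_conj {R : Type*} [CommRing R] {A S : Matrix n n R} (hS : IsUnit S)
    (h : (S * A * S⁻¹).IsDiagonalizable) : A.IsDiagonalizable := by
  obtain ⟨P, D, hP, hD, hSA⟩ := h
  have hS' : IsUnit S.det := (isUnit_iff_isUnit_det S).mp hS
  refine ⟨S⁻¹ * P, D, (isUnit_nonsing_inv_iff.mpr hS).mul hP, hD, ?_⟩
  calc A = S⁻¹ * (S * A * S⁻¹) * S := by
          simp only [← mul_assoc, nonsing_inv_mul S hS', one_mul, mul_assoc A, mul_one]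
    _ = S⁻¹ * P * D * (S⁻¹ * P)⁻¹ := by
          rw [hSA, mul_inv_rev, nonsing_inv_nonsing_inv S hS']
          simp only [mul_assoc]

variable {𝕜 : Type*} [RCLike 𝕜]

theorem IsHermitian.isDiagonalizable {M : Matrix n n 𝕜} (hM : M.IsHermitian) :
    M.IsDiagonalizable := by
  set U := hM.eigenvectorUnitary
  refine ⟨U, _, (Unitary.toUnits U).isUnit, isDiag_diagonal (RCLike.ofReal ∘ hM.eigenvalues), ?_⟩
  rw [inv_eq_left_inv (Unitary.coe_star_mul_self U)]
  exact hM.spectral_theorem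

theorem PosDef.isHermitian_sqrt_mul_mul_inv_sqrt {H A : Matrix n n 𝕜} (hH : H.PosDef)
    (hHA : (H * A).IsHermitian) : (CFC.sqrt H * A * (CFC.sqrt H)⁻¹).IsHermitian := by
  set S := CFC.sqrt H
  have hS : S.IsHermitian := (CFC.sqrt_nonneg H).posSemidef.1
  have hSS : S * S = H := CFC.sqrt_mul_sqrt_self H hH.posSemidef.nonneg
  have hSdet : IsUnit S.det := (isUnit_iff_isUnit_det S).mp hH.isStrictlyPositive.sqrt.isUnit
  have hAH : Aᴴ * (S * S) = S * S * A := by rw [hSS, ← hH.1.eq, ← conjTranspose_mul, hHA.eq, hH.1.eq]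
  calc (S * A * S⁻¹)ᴴ = S⁻¹ * Aᴴ * S := by
        rw [conjTranspose_mul, conjTranspose_mul, conjTranspose_nonsing_inv, hS.eq, mul_assoc]
    _ = S⁻¹ * (Aᴴ * (S * S)) * S⁻¹ := by
        simp only [← mul_assoc, mul_nonsing_inv_cancel_right S _ hSdet]
    _ = S * A * S⁻¹ := by
        rw [hAH, mul_assoc S, nonsing_inv_mul_cancel_left S _ hSdet, mul_assoc]

theorem PosDef.isDiagonalizable_of_isHermitian_mul {H A : Matrix n n 𝕜} (hH : H.PosDef)
    (hHA : (H * A).IsHermitian) : A.IsDiagonalizable :=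
  .of_conj hH.isStrictlyPositive.sqrt.isUnit
    (hH.isHermitian_sqrt_mul_mul_inv_sqrt hHA).isDiagonalizable

theorem IsDiagonalizable.exists_posDef_isHermitian_mul {R : Type*} [Field R] [PartialOrder R]
    [StarRing R] [StarOrderedRing R] [TrivialStar R] {A : Matrix n n R}
    (hA : A.IsDiagonalizable) : ∃ H : Matrix n n R, H.PosDef ∧ (H * A).IsHermitian := by
  obtain ⟨P, D, hP, hD, rfl⟩ := hA
  have hPdet : IsUnit P.det := (isUnit_iff_isUnit_det P).mp hP
  refine ⟨(P⁻¹)ᴴ * P⁻¹, PosDef.conjTranspose_mul_self _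
    (mulVec_injective_of_isUnit (isUnit_nonsing_inv_iff.mpr hP)), ?_⟩
  rw [← mul_assoc, mul_assoc _ P⁻¹, nonsing_inv_mul_cancel_left P _ hPdet]
  exact isHermitian_conjTranspose_mul_mul _ (isHermitian_iff_isSymm.mpr hD.isSymm)

end Matrix

theorem stmt_6 (n : ℕ) (A : Matrix (Fin n) (Fin n) ℝ) :
    (∃ (P D : Matrix (Fin n) (Fin n) ℝ), IsUnit P ∧ D.IsDiag ∧ A = P * D * P⁻¹)
      ↔ ∃ H : Matrix (Fin n) (Fin n) ℝ, H.PosDef ∧ Hᵀ = H ∧ (H * A)ᵀ = H * A := by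
  simp only [← conjTranspose_eq_transpose_of_trivial]
  refine ⟨fun hA => ?_, fun ⟨H, hH, _, hHA⟩ => hH.isDiagonalizable_of_isHermitian_mul hHA⟩
  obtain ⟨H, hH, hHA⟩ := IsDiagonalizable.exists_posDef_isHermitian_mul hA
  exact ⟨H, hH, hH.1, hHA⟩
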